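/- The Fibonacci word contains no factor that is a β-power for β = (5+√5)/2; i.e., it contains no factor w with period p and |w| ≥ ⌈β·p⌉. -/

import Mathlib

/-- `u` is a factor (contiguous block) of the infinite word `x`. -/
def FactorOf {α : Type*} (u : List α) (x : ℕ → α) : Prop :=
  ∃ i, u = (List.range u.length).map fun t => x (i + t)

/-- Subword complexity: number of distinct length-`n` factors of `x`. -/
noncomputable def Complexity {α : Type*} (x : ℕ → α) (n : ℕ) : ℕ :=
  Set.ncard {u : List α | u.length = n ∧ FactorOf u x}

/-- A Sturmian word: infinite binary word with exactly `n+1` factors of each length `n`. -/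
def Sturmian (x : ℕ → Bool) : Prop := ∀ n, Complexity x n = n + 1

/-- A balanced binary word: counts of each letter in equal-length factors differ by at most 1. -/
def BalancedWord (w : List Bool) : Prop :=
  ∀ u v : List Bool, u <:+: w → v <:+: w → u.length = v.length →
    ∀ a : Bool, ((u.count a : ℤ) - (v.count a : ℤ)).natAbs ≤ 1

/-- The finite word `w` has period `p`: `w[i] = w[i+p]` for all valid `i`. -/
def HasPeriodL {α : Type*} (w : List α) (p : ℕ) : Prop :=
  ∀ i, i + p < w.length → w[i]? = w[i + p]?

/-- A cube of period `j ≥ 1` ends at position `n` of the infinite word `x`. -/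
def CubeEndAt {α : Type*} (x : ℕ → α) (n : ℕ) : Prop :=
  ∃ i j, 1 ≤ j ∧ i + 3 * j = n ∧ ∀ t < 2 * j, x (i + t) = x (i + j + t)

/-- A cube of period `j ≥ 1` ends at position `n` of the finite word `w`. -/
def CubeEnd (w : List Bool) (j n : ℕ) : Prop :=
  1 ≤ j ∧ n ≤ w.length ∧ ∃ i, i + 3 * j = n ∧ ∀ t < 2 * j, w[i + t]? = w[i + j + t]?


/-- The Fibonacci morphism `0 → 01`, `1 → 0`. -/
def fibMorph : Bool → List Bool
  | false => [false, true]
  | true => [false]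

/-- Iterates of the Fibonacci morphism on `0`. -/
def fibIter : ℕ → List Bool
  | 0 => [false]
  | n + 1 => (fibIter n).flatMap fibMorph

/-- The Fibonacci word, fixed point of `0 → 01`, `1 → 0` (each `fibIter n` is a
prefix of `fibIter (n+1)`, and `fibIter (n+1)` has length `> n`). -/
def fibWord (n : ℕ) : Bool := (fibIter (n + 1)).getD n false

/-!
The Fibonacci word is the Sturmian word of the gaps of the lower Wythoff sequence `⌊n φ⌋`: its
letter `n` is `1` exactly when `⌊(n + 2) φ⌋ - ⌊(n + 1) φ⌋ = 1`, because both words are fixed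
points of `σ : 0 ↦ 01, 1 ↦ 0`, and `σ` has only one.

Let `F n ≤ p < F (n + 1)`. A factor starting at `i` with period `p` and length at least
`⌈(φ + 2) p⌉ ≥ F (n + 2) + p` makes `⌊(j + p) φ⌋ - ⌊j φ⌋` constant for
`j ∈ [i + 1, i + 1 + F (n + 2)]`. That difference is `⌊p φ⌋` plus a carry, which is `1` exactly when
`fract (j φ) + fract (p φ) ≥ 1`. As `F k φ ≡ -ψ ^ k` modulo `1`, in every window of
`F (n + 2) + 1` consecutive integers `fract (j φ)` comes within `|ψ| ^ n` of both `0` and `1`,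
whereas the best approximation property of the Fibonacci numbers keeps `fract (p φ)` within
`[|ψ| ^ n, 1 - |ψ| ^ n]`. So both carries occur in the window, a contradiction.
-/

open Real goldenRatio

lemma natCast_fib_mul_goldenRatio (k : ℕ) : (Nat.fib k : ℝ) * φ = Nat.fib (k + 1) - ψ ^ k := by
  linarith [fib_succ_sub_goldenRatio_mul_fib k]

lemma abs_goldenConj_pos : 0 < |ψ| := abs_pos.2 goldenConj_ne_zero

lemma abs_goldenConj_lt_one : |ψ| < 1 :=
  abs_lt.2 ⟨neg_one_lt_goldenConj, goldenConj_neg.trans one_pos⟩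

lemma abs_goldenConj_pow_add_pow (n : ℕ) : |ψ| ^ (n + 1) + |ψ| ^ (n + 2) = |ψ| ^ n := by
  have h : |ψ| ^ 2 + |ψ| = 1 := by
    rw [abs_of_neg goldenConj_neg, neg_sq, goldenConj_sq]; ring
  linear_combination |ψ| ^ n * h

lemma goldenConj_pow_of_even {k : ℕ} (hk : Even k) : ψ ^ k = |ψ| ^ k := by
  rw [← hk.pow_abs]

lemma goldenConj_pow_of_odd {k : ℕ} (hk : Odd k) : ψ ^ k = -|ψ| ^ k := by
  rw [abs_of_neg goldenConj_neg, hk.neg_pow, neg_neg]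

theorem abs_goldenConj_pow_le_abs_mul_goldenRatio_sub (n : ℕ) {p : ℤ} (hp : 0 < p)
    (hpn : p < Nat.fib (n + 1)) (m : ℤ) : |ψ| ^ n ≤ |p * φ - m| := by
  induction n generalizing p m with
  | zero => simp at hpn; omega
  | succ n ih =>
    obtain _ | n := n
    · simp at hpn; omega
    -- the descent `(p, m) ↦ (m - p, p)` of the continued fraction of `φ`
    set q := m - p
    have hdesc : (p : ℝ) * φ - m = ψ * (q * φ - p) := by
      push_cast [q]
      linear_combination (↑p - ↑m) * goldenConj_mul_goldenRatio - ↑p * goldenRatio_add_goldenConj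
    rw [hdesc, abs_mul, pow_succ', mul_le_mul_iff_of_pos_left abs_goldenConj_pos]
    rcases le_or_gt q 0 with hq | hq
    · have hp₁ : (1 : ℝ) ≤ p := by exact_mod_cast hp
      have hqφ : (q : ℝ) * φ ≤ 0 :=
        mul_nonpos_of_nonpos_of_nonneg (by exact_mod_cast hq) goldenRatio_pos.le
      rw [abs_sub_comm, abs_of_nonneg (a := (p : ℝ) - q * φ) (by linarith)]
      linarith [pow_le_one₀ (n := n + 1) (abs_nonneg ψ) abs_goldenConj_lt_one.le]
    rcases lt_or_ge q (Nat.fib (n + 2)) with hqn | hqn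
    · exact ih hq hqn p
    · have hfib : (Nat.fib (n + 2) : ℝ) * φ = Nat.fib (n + 3) - ψ ^ (n + 2) :=
        natCast_fib_mul_goldenRatio (n + 2)
      have hpf : (p : ℝ) + 1 ≤ Nat.fib (n + 3) := by
        have : p + 1 ≤ Nat.fib (n + 3) := by simpa using hpn
        exact_mod_cast this
      have hqf : (Nat.fib (n + 2) : ℝ) ≤ q := by exact_mod_cast hqn
      have hψ : ψ ^ (n + 2) ≤ |ψ| ^ (n + 2) := by rw [← abs_pow]; exact le_abs_self _
      refine le_trans ?_ (le_abs_self _)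
      linarith [mul_le_mul_of_nonneg_right hqf goldenRatio_pos.le, abs_goldenConj_pow_add_pow n,
        pow_le_one₀ (n := n) (abs_nonneg ψ) abs_goldenConj_lt_one.le]

theorem fract_mul_goldenRatio_mem_Icc (n : ℕ) {p : ℕ} (hp : 0 < p) (hpn : p < Nat.fib (n + 1)) :
    Int.fract (p * φ) ∈ Set.Icc (|ψ| ^ n) (1 - |ψ| ^ n) := by
  have hp' : (0 : ℤ) < p := by exact_mod_cast hp
  have hpn' : (p : ℤ) < Nat.fib (n + 1) := by exact_mod_cast hpn
  have h₀ := abs_goldenConj_pow_le_abs_mul_goldenRatio_sub n hp' hpn' ⌊(p : ℝ) * φ⌋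
  have h₁ := abs_goldenConj_pow_le_abs_mul_goldenRatio_sub n hp' hpn' (⌊(p : ℝ) * φ⌋ + 1)
  rw [Int.cast_natCast, Int.self_sub_floor, abs_of_nonneg (Int.fract_nonneg ((p : ℝ) * φ))] at h₀
  rw [Int.cast_natCast, Int.cast_add, Int.cast_one, ← sub_sub, Int.self_sub_floor,
    abs_of_neg (a := Int.fract ((p : ℝ) * φ) - 1)
      (by linarith [Int.fract_lt_one ((p : ℝ) * φ)])] at h₁
  constructor <;> linarith

lemma fract_add_natCast_fib_mul_goldenRatio (x : ℝ) (k : ℕ) :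
    Int.fract (x + Nat.fib k * φ) = Int.fract (Int.fract x - ψ ^ k) := by
  rw [Int.fract_eq_fract, natCast_fib_mul_goldenRatio]
  exact ⟨⌊x⌋ + Nat.fib (k + 1), by push_cast; linarith [Int.floor_add_fract x]⟩

lemma fract_mem_Ico_of_add_or_sub {x a b c : ℝ} (ha : 0 < a) (hb : 0 < b) (hc : 0 ≤ c)
    (hc₁ : c + (a + b) ≤ 1) (hx : x ∈ Set.Ico c (c + (a + b))) :
    Int.fract (x + a) ∈ Set.Ico c (c + (a + b)) ∨ Int.fract (x - b) ∈ Set.Ico c (c + (a + b)) := by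
  obtain ⟨hcx, hxc⟩ := hx
  rcases lt_or_ge (x + a) (c + (a + b)) with h | h
  · left
    rw [Int.fract_eq_self.2 ⟨by linarith, by linarith⟩]
    exact ⟨by linarith, h⟩
  · right
    rw [Int.fract_eq_self.2 ⟨by linarith, by linarith⟩]
    exact ⟨by linarith, by linarith⟩

/-- One of the two shifts by `F (n + 1)` and `F (n + 2)` moves `fract x` up, the other one
down, by amounts adding up to the length `|ψ| ^ n` of the target interval. -/
lemma exists_fract_add_fib_mem_Ico (n : ℕ) {c x : ℝ} (hc : 0 ≤ c) (hc₁ : c + |ψ| ^ n ≤ 1)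
    (hx : Int.fract x ∈ Set.Ico c (c + |ψ| ^ n)) :
    ∃ k, n + 1 ≤ k ∧ k ≤ n + 2 ∧ Int.fract (x + Nat.fib k * φ) ∈ Set.Ico c (c + |ψ| ^ n) := by
  simp_rw [fract_add_natCast_fib_mul_goldenRatio]
  have hpos (k : ℕ) : 0 < |ψ| ^ k := pow_pos abs_goldenConj_pos k
  rcases Nat.even_or_odd n with hn | hn
  · have hsum := abs_goldenConj_pow_add_pow n
    rw [← hsum] at hc₁ hx ⊢
    rcases fract_mem_Ico_of_add_or_sub (hpos _) (hpos _) hc hc₁ hx with h | h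
    · exact ⟨n + 1, le_rfl, by omega, by rwa [goldenConj_pow_of_odd hn.add_one, sub_neg_eq_add]⟩
    · exact ⟨n + 2, by omega, le_rfl,
        by rwa [goldenConj_pow_of_even (by simpa [parity_simps] using hn)]⟩
  · have hsum : |ψ| ^ (n + 2) + |ψ| ^ (n + 1) = |ψ| ^ n := by
      rw [add_comm]; exact abs_goldenConj_pow_add_pow n
    rw [← hsum] at hc₁ hx ⊢
    rcases fract_mem_Ico_of_add_or_sub (hpos _) (hpos _) hc hc₁ hx with h | h
    · exact ⟨n + 2, by omega, le_rfl,
        by rwa [goldenConj_pow_of_odd (by simpa [parity_simps] using hn), sub_neg_eq_add]⟩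
    · exact ⟨n + 1, le_rfl, by omega, by rwa [goldenConj_pow_of_even hn.add_one]⟩

lemma exists_fract_mul_goldenRatio_mem_Ico (n : ℕ) {c : ℝ} (hc : 0 ≤ c) (hc₁ : c + |ψ| ^ n ≤ 1)
    {j₀ : ℕ} (hj₀ : j₀ ≤ Nat.fib (n + 2))
    (h₀ : Int.fract (j₀ * φ) ∈ Set.Ico c (c + |ψ| ^ n)) (i : ℕ) :
    ∃ j, i ≤ j ∧ j ≤ i + Nat.fib (n + 2) ∧ Int.fract (j * φ) ∈ Set.Ico c (c + |ψ| ^ n) := by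
  induction i with
  | zero => exact ⟨j₀, j₀.zero_le, by omega, h₀⟩
  | succ i ih =>
    obtain ⟨j, hij, hji, hj⟩ := ih
    rcases hij.lt_or_eq with hij | rfl
    · exact ⟨j, hij, by omega, hj⟩
    obtain ⟨k, hk₁, hk₂, hk⟩ := exists_fract_add_fib_mem_Ico n hc hc₁ hj
    have hfib₁ : 1 ≤ Nat.fib k := Nat.fib_pos.2 (by omega)
    have hfib₂ : Nat.fib k ≤ Nat.fib (n + 2) := Nat.fib_mono hk₂
    exact ⟨i + Nat.fib k, by omega, by omega, by push_cast; rwa [add_mul]⟩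

lemma exists_fract_mul_goldenRatio_lt (n i : ℕ) :
    ∃ j, i ≤ j ∧ j ≤ i + Nat.fib (n + 2) ∧ Int.fract (j * φ) < |ψ| ^ n := by
  have hψ : |ψ| ^ n ≤ 1 := pow_le_one₀ (abs_nonneg ψ) abs_goldenConj_lt_one.le
  obtain ⟨j, hij, hji, hj⟩ := exists_fract_mul_goldenRatio_mem_Ico n le_rfl (by simpa using hψ)
    (j₀ := 0) (Nat.zero_le _) (by simp [pow_pos abs_goldenConj_pos]) i
  exact ⟨j, hij, hji, by simpa using hj.2⟩

lemma exists_one_sub_le_fract_mul_goldenRatio (n i : ℕ) :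
    ∃ j, i ≤ j ∧ j ≤ i + Nat.fib (n + 2) ∧ 1 - |ψ| ^ n ≤ Int.fract (j * φ) := by
  have hψ : |ψ| ^ n ≤ 1 := pow_le_one₀ (abs_nonneg ψ) abs_goldenConj_lt_one.le
  obtain ⟨k, hk₁, hk₂, hk⟩ : ∃ k, n + 1 ≤ k ∧ k ≤ n + 2 ∧ Even k := by
    rcases Nat.even_or_odd n with hn | hn
    · exact ⟨n + 2, by omega, le_rfl, by simpa [parity_simps] using hn⟩
    · exact ⟨n + 1, le_rfl, by omega, hn.add_one⟩
  have hψk : |ψ| ^ k < 1 := pow_lt_one₀ (abs_nonneg ψ) abs_goldenConj_lt_one (by omega)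
  have hψkn : |ψ| ^ k ≤ |ψ| ^ n :=
    pow_le_pow_of_le_one (abs_nonneg ψ) abs_goldenConj_lt_one.le (by omega)
  have h₀ : Int.fract (Nat.fib k * φ) = 1 - |ψ| ^ k := by
    rw [← zero_add ((Nat.fib k : ℝ) * φ), fract_add_natCast_fib_mul_goldenRatio, Int.fract_zero,
      zero_sub,
      goldenConj_pow_of_even hk, ← Int.fract_add_one, Int.fract_eq_self.2]
    · ring
    · constructor <;> linarith [pow_pos abs_goldenConj_pos k]
  obtain ⟨j, hij, hji, hj⟩ := exists_fract_mul_goldenRatio_mem_Ico n (c := 1 - |ψ| ^ n)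
    (by linarith) (by linarith) (Nat.fib_mono hk₂)
    ⟨by rw [h₀]; linarith, by rw [h₀]; linarith [pow_pos abs_goldenConj_pos k]⟩ i
  exact ⟨j, hij, hji, hj.1⟩

lemma Nat.floor_add_eq_floor_add_floor_add_floor_fract {R : Type*} [Ring R] [LinearOrder R]
    [IsStrictOrderedRing R] [FloorRing R] {a b : R} (ha : 0 ≤ a) (hb : 0 ≤ b) :
    ⌊a + b⌋₊ = ⌊a⌋₊ + ⌊b⌋₊ + ⌊Int.fract a + Int.fract b⌋₊ := by
  have hab : a + b = Int.fract a + Int.fract b + ((⌊a⌋₊ + ⌊b⌋₊ : ℕ) : R) := by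
    push_cast
    rw [natCast_floor_eq_intCast_floor ha, natCast_floor_eq_intCast_floor hb]
    conv_lhs => rw [← Int.floor_add_fract a, ← Int.floor_add_fract b]
    abel
  rw [hab, Nat.floor_add_natCast (by positivity)]
  ring

noncomputable def wythoff (n : ℕ) : ℕ := ⌊(n : ℝ) * φ⌋₊

lemma wythoff_add_fract (n : ℕ) : (wythoff n : ℝ) + Int.fract (n * φ) = n * φ := by
  rw [wythoff, natCast_floor_eq_intCast_floor (by positivity), Int.floor_add_fract]

lemma fract_mul_goldenRatio_pos {n : ℕ} (hn : 0 < n) : 0 < Int.fract (n * φ) := by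
  refine (Int.fract_nonneg _).lt_of_ne fun h => ?_
  refine (goldenRatio_irrational.natCast_mul hn.ne').ne_nat (wythoff n) ?_
  linarith [wythoff_add_fract n]

lemma wythoff_one : wythoff 1 = 1 := by
  rw [wythoff, Nat.floor_eq_iff (by positivity)]
  push_cast
  constructor <;> linarith [one_lt_goldenRatio, goldenRatio_lt_two]

lemma wythoff_add (j p : ℕ) :
    wythoff (j + p) = wythoff j + wythoff p + ⌊Int.fract (j * φ) + Int.fract (p * φ)⌋₊ := by
  rw [wythoff, Nat.cast_add, add_mul, Nat.floor_add_eq_floor_add_floor_add_floor_fract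
    (by positivity) (by positivity)]
  rfl

lemma wythoff_add_of_fract_add_lt_one {j p : ℕ} (h : Int.fract (j * φ) + Int.fract (p * φ) < 1) :
    wythoff (j + p) = wythoff j + wythoff p := by
  rw [wythoff_add, Nat.floor_eq_zero.2 h, add_zero]

lemma wythoff_add_of_one_le_fract_add {j p : ℕ}
    (h : 1 ≤ Int.fract (j * φ) + Int.fract (p * φ)) :
    wythoff (j + p) = wythoff j + wythoff p + 1 := by
  rw [wythoff_add, add_right_inj, Nat.floor_eq_iff (by positivity)]
  push_cast
  exact ⟨h, by linarith [Int.fract_lt_one ((j : ℝ) * φ), Int.fract_lt_one ((p : ℝ) * φ)]⟩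

lemma wythoff_succ (n : ℕ) : wythoff (n + 1) = wythoff n + 1 ∨ wythoff (n + 1) = wythoff n + 2 := by
  rcases lt_or_ge (Int.fract (n * φ) + Int.fract ((1 : ℕ) * φ)) 1 with h | h
  · left; rw [wythoff_add_of_fract_add_lt_one h, wythoff_one]
  · right; rw [wythoff_add_of_one_le_fract_add h, wythoff_one]

lemma wythoff_mul_goldenRatio (N : ℕ) :
    (wythoff N : ℝ) * φ = wythoff N + N - Int.fract (N * φ) * (φ - 1) := by
  have h := wythoff_add_fract N
  linear_combination (φ - 1) * h - (N : ℝ) * goldenRatio_sq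
    + (N / 2 : ℝ) * Real.sq_sqrt (show (0 : ℝ) ≤ 5 by norm_num)

lemma wythoff_wythoff {N : ℕ} (hN : 0 < N) : wythoff (wythoff N) + 1 = wythoff N + N := by
  have h := wythoff_mul_goldenRatio N
  have hf := fract_mul_goldenRatio_pos hN
  have hf₁ := Int.fract_lt_one ((N : ℝ) * φ)
  have : wythoff (wythoff N) = wythoff N + N - 1 := by
    rw [wythoff, Nat.floor_eq_iff (by positivity)]
    have : 1 ≤ wythoff N + N := by omega
    push_cast [this]
    constructor <;> nlinarith [one_lt_goldenRatio, goldenRatio_lt_two]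
  omega

lemma wythoff_wythoff_add_one (N : ℕ) : wythoff (wythoff N + 1) = wythoff N + N + 1 := by
  have h := wythoff_mul_goldenRatio N
  have hf₀ := Int.fract_nonneg ((N : ℝ) * φ)
  have hf₁ := Int.fract_lt_one ((N : ℝ) * φ)
  rw [wythoff, Nat.floor_eq_iff (by positivity)]
  push_cast
  constructor <;> nlinarith [one_lt_goldenRatio, goldenRatio_lt_two]

lemma wythoff_wythoff_add_two {N : ℕ} (hN : wythoff (N + 1) = wythoff N + 2) :
    wythoff (wythoff N + 2) = wythoff N + N + 2 := by
  have h := wythoff_mul_goldenRatio N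
  have hf₁ := Int.fract_lt_one ((N : ℝ) * φ)
  -- strict because `(N + 1) φ` is irrational
  have hf : 2 - φ < Int.fract (N * φ) := by
    have h₁ := wythoff_add_fract (N + 1)
    have h₂ := fract_mul_goldenRatio_pos N.succ_pos
    rw [hN] at h₁
    push_cast at h₁ h₂
    linarith [wythoff_add_fract N]
  rw [wythoff, Nat.floor_eq_iff (by positivity)]
  push_cast
  constructor <;> nlinarith [one_lt_goldenRatio, goldenRatio_sq,
    mul_lt_mul_of_pos_right hf (sub_pos.2 one_lt_goldenRatio)]

/-- The position at which the block `σ (x k)` starts in `σ x`. -/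
def imageLength (x : ℕ → Bool) (k : ℕ) : ℕ := (((List.range k).map x).flatMap fibMorph).length

lemma imageLength_zero (x : ℕ → Bool) : imageLength x 0 = 0 := rfl

lemma imageLength_succ (x : ℕ → Bool) (k : ℕ) :
    imageLength x (k + 1) = imageLength x k + (fibMorph (x k)).length := by
  simp [imageLength, List.range_succ]

lemma le_imageLength (x : ℕ → Bool) (k : ℕ) : k ≤ imageLength x k := by
  induction k with
  | zero => rfl
  | succ k ih => rw [imageLength_succ]; cases x k <;> simp [fibMorph] <;> omega

lemma imageLength_congr {x y : ℕ → Bool} {k : ℕ} (h : ∀ m < k, x m = y m) :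
    imageLength x k = imageLength y k := by
  unfold imageLength
  congr 2
  exact List.map_congr_left fun m hm => h m (List.mem_range.1 hm)

lemma exists_imageLength_le_lt (x : ℕ → Bool) (n : ℕ) :
    ∃ k, imageLength x k ≤ n ∧ n < imageLength x (k + 1) := by
  induction n with
  | zero => exact ⟨0, le_rfl, by rw [imageLength_succ]; cases x 0 <;> simp [fibMorph]⟩
  | succ n ih =>
    obtain ⟨k, hk₁, hk₂⟩ := ih
    rcases lt_or_ge (n + 1) (imageLength x (k + 1)) with h | h
    · exact ⟨k, by omega, h⟩
    · refine ⟨k + 1, h, ?_⟩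
      rw [imageLength_succ]
      cases x (k + 1) <;> simp [fibMorph] <;> omega

/-- `x = σ x` for `σ : 0 ↦ 01, 1 ↦ 0`, read block by block. When `x k = 1` the block `σ (x k)`
is `0`, already the first letter of the next block, so only the second letter of a block
`σ 0 = 01` needs a condition of its own. -/
def IsFibFixedPoint (x : ℕ → Bool) : Prop :=
  ∀ k, x (imageLength x k) = false ∧ (x k = false → x (imageLength x k + 1) = true)

lemma IsFibFixedPoint.unique {x y : ℕ → Bool} (hx : IsFibFixedPoint x) (hy : IsFibFixedPoint y) :
    x = y := by
  funext n
  induction n using Nat.strong_induction_on with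
  | _ n ih =>
    obtain ⟨k, hk₁, hk₂⟩ := exists_imageLength_le_lt x n
    have hkn : k ≤ n := (le_imageLength x k).trans hk₁
    have hxy : imageLength x k = imageLength y k :=
      imageLength_congr fun m hm => ih m (by omega)
    rcases hk₁.lt_or_eq with hk₁ | rfl
    · rw [imageLength_succ] at hk₂
      cases hxk : x k with
      | true => simp [hxk, fibMorph] at hk₂; omega
      | false =>
        have hn : n = imageLength x k + 1 := by
          simp [hxk, fibMorph] at hk₂; omega
        have hyk : y k = false := by rw [← ih k ((le_imageLength x k).trans_lt hk₁), hxk]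
        rw [hn, (hx k).2 hxk, hxy, (hy k).2 hyk]
    · rw [(hx k).1, hxy, (hy k).1]

lemma fibIter_add_two (n : ℕ) : fibIter (n + 2) = fibIter (n + 1) ++ fibIter n := by
  induction n with
  | zero => rfl
  | succ n ih =>
    change (fibIter (n + 2)).flatMap fibMorph =
      (fibIter (n + 1)).flatMap fibMorph ++ fibIter (n + 1)
    rw [ih, List.flatMap_append]
    rfl

lemma length_fibIter (n : ℕ) : (fibIter n).length = Nat.fib (n + 2) := by
  induction n using Nat.twoStepInduction with
  | zero => rfl
  | one => rfl
  | more n ih₁ ih₂ =>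
    rw [fibIter_add_two, List.length_append, ih₁, ih₂]
    simp only [Nat.fib_add_two]
    omega

lemma fibIter_prefix {m n : ℕ} (h : m ≤ n) : fibIter m <+: fibIter n := by
  induction n, h using Nat.le_induction with
  | base => exact List.prefix_refl _
  | succ n _ ih =>
    refine ih.trans ?_
    cases n with
    | zero => exact ⟨[true], rfl⟩
    | succ n => exact ⟨fibIter n, (fibIter_add_two n).symm⟩

lemma lt_length_fibIter_succ (n : ℕ) : n < (fibIter (n + 1)).length := by
  rw [length_fibIter]
  linarith [Nat.le_fib_add_one (n + 3), Nat.fib_add_two (n := n + 1)]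

lemma fibWord_eq_getElem {m n : ℕ} (h : n < (fibIter m).length) : fibWord n = (fibIter m)[n] := by
  have hn := lt_length_fibIter_succ n
  rw [fibWord, List.getD_eq_getElem _ _ hn]
  rcases le_total (n + 1) m with hm | hm
  · exact (fibIter_prefix hm).getElem hn
  · exact ((fibIter_prefix hm).getElem h).symm

lemma take_fibIter {m k : ℕ} (hk : k ≤ (fibIter m).length) :
    (fibIter m).take k = (List.range k).map fibWord := by
  apply List.ext_getElem (by simpa using hk)
  intro t h₁ h₂
  simp only [List.getElem_take, List.getElem_map, List.getElem_range]
  exact (fibWord_eq_getElem (by simp at h₁; omega)).symm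

lemma fibWord_imageLength_add (k : ℕ) {r : ℕ} (hr : r < (fibMorph (fibWord k)).length) :
    fibWord (imageLength fibWord k + r) = (fibMorph (fibWord k))[r] := by
  set u := fibIter (k + 1)
  have hk : k < u.length := lt_length_fibIter_succ k
  have hu : u = (List.range k).map fibWord ++ fibWord k :: u.drop (k + 1) := by
    conv_lhs => rw [← List.take_append_drop k u, List.drop_eq_getElem_cons hk]
    rw [take_fibIter hk.le, fibWord_eq_getElem hk]
  have hiter : fibIter (k + 2) = u.flatMap fibMorph := rfl
  have hlen : imageLength fibWord k + r < (fibIter (k + 2)).length := by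
    rw [hiter, hu]; simp [imageLength]; omega
  rw [fibWord_eq_getElem hlen, ← Option.some_inj, ← List.getElem?_eq_getElem, hiter, hu,
    List.flatMap_append, List.flatMap_cons, imageLength, List.getElem?_append_right le_self_add,
    Nat.add_sub_cancel_left, List.getElem?_append_left hr, List.getElem?_eq_getElem hr]

lemma isFibFixedPoint_fibWord : IsFibFixedPoint fibWord := by
  intro k
  constructor
  · have := fibWord_imageLength_add k (r := 0) (by cases fibWord k <;> simp [fibMorph])
    cases h : fibWord k <;> simp_all [fibMorph]
  · intro hk
    have := fibWord_imageLength_add k (r := 1) (by simp [hk, fibMorph])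
    simp_all [fibMorph]

/-- The gaps `1` and `2` of the Wythoff sequence, coded as `1` and `0`. -/
noncomputable def wythoffWord (n : ℕ) : Bool := decide (wythoff (n + 2) = wythoff (n + 1) + 1)

lemma imageLength_wythoffWord (k : ℕ) : imageLength wythoffWord k + 1 = wythoff (k + 1) := by
  induction k with
  | zero => rw [imageLength_zero, zero_add, wythoff_one]
  | succ k ih =>
    rw [imageLength_succ, wythoffWord]
    rcases wythoff_succ (k + 1) with h | h <;> simp [h, fibMorph] <;> omega

lemma isFibFixedPoint_wythoffWord : IsFibFixedPoint wythoffWord := by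
  intro k
  have hm := imageLength_wythoffWord k
  have h₀ := wythoff_wythoff (N := k + 1) k.succ_pos
  have h₁ := wythoff_wythoff_add_one (k + 1)
  constructor
  · rw [wythoffWord, decide_eq_false_iff_not, show ∀ a, a + 2 = a + 1 + 1 from fun _ => rfl, hm]
    omega
  · intro hk
    have hgap : wythoff (k + 2) = wythoff (k + 1) + 2 := by
      rw [wythoffWord, decide_eq_false_iff_not] at hk
      exact (wythoff_succ (k + 1)).resolve_left hk
    have h₂ := wythoff_wythoff_add_two hgap
    rw [wythoffWord, decide_eq_true_iff, hm]
    omega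

theorem fibWord_eq_wythoffWord : fibWord = wythoffWord :=
  isFibFixedPoint_fibWord.unique isFibFixedPoint_wythoffWord

lemma hasPeriodL_map_range_iff {α : Type*} {x : ℕ → α} {i L p : ℕ} :
    HasPeriodL ((List.range L).map fun t => x (i + t)) p ↔
      ∀ t, t + p < L → x (i + t) = x (i + t + p) := by
  simp only [HasPeriodL, List.length_map, List.length_range]
  refine forall_congr' fun t => imp_congr_right fun h => ?_
  rw [List.getElem?_map, List.getElem?_map, List.getElem?_range (by omega), List.getElem?_range h,
    Option.map_some, Option.map_some, Option.some_inj, add_assoc]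

lemma wythoff_gap_eq_of_wythoffWord_eq {k l : ℕ} (h : wythoffWord k = wythoffWord l) :
    wythoff (k + 2) + wythoff (l + 1) = wythoff (k + 1) + wythoff (l + 2) := by
  have hk : wythoff (k + 2) = wythoff (k + 1) + 1 ∨ wythoff (k + 2) = wythoff (k + 1) + 2 :=
    wythoff_succ (k + 1)
  have hl : wythoff (l + 2) = wythoff (l + 1) + 1 ∨ wythoff (l + 2) = wythoff (l + 1) + 2 :=
    wythoff_succ (l + 1)
  unfold wythoffWord at h
  rcases hk with hk | hk <;> rcases hl with hl | hl <;> simp [hk, hl] at h <;> omega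

lemma wythoff_add_add_wythoff_eq_of_periodic {a p L : ℕ}
    (h : ∀ t < L, wythoffWord (a + t) = wythoffWord (a + t + p)) {t : ℕ} (ht : t ≤ L) :
    wythoff (a + 1 + t + p) + wythoff (a + 1) = wythoff (a + 1 + t) + wythoff (a + 1 + p) := by
  induction t with
  | zero => rw [add_zero, add_comm]
  | succ t ih =>
    have hgap := wythoff_gap_eq_of_wythoffWord_eq (h t (by omega))
    have hprev := ih (by omega)
    rw [show a + 1 + t + p = a + t + p + 1 by ring, show a + 1 + t = a + t + 1 by ring] at hprev
    rw [show a + 1 + (t + 1) + p = a + t + p + 2 by ring, show a + 1 + (t + 1) = a + t + 2 by ring]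
    omega

lemma fib_add_two_add_le_ceil {n p : ℕ} (hn : 1 ≤ n) (hp : Nat.fib n ≤ p) :
    Nat.fib (n + 2) + p ≤ ⌈(φ + 2) * p⌉₊ := by
  rw [show (φ + 2) * p = (φ + 1) * p + p by ring, Nat.ceil_add_natCast (by positivity),
    add_le_add_iff_right]
  have hfib : (φ + 1) * Nat.fib n = Nat.fib (n + 2) - ψ ^ n := by
    have := natCast_fib_mul_goldenRatio n
    rw [Nat.fib_add_two, Nat.cast_add]
    linear_combination this
  have hψ : ψ ^ n < 1 := (le_abs_self _).trans_lt
    (by rw [abs_pow]; exact pow_lt_one₀ (abs_nonneg ψ) abs_goldenConj_lt_one (by omega))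
  have hp' : (φ + 1) * Nat.fib n ≤ (φ + 1) * p :=
    mul_le_mul_of_nonneg_left (by exact_mod_cast hp) (by linarith [goldenRatio_pos])
  have hpos : 1 ≤ Nat.fib (n + 2) := Nat.fib_pos.2 (by omega)
  have : Nat.fib (n + 2) - 1 < ⌈(φ + 1) * p⌉₊ := by
    rw [Nat.lt_ceil, Nat.cast_sub hpos]
    push_cast
    linarith
  omega

theorem stmt19 :
    ¬ ∃ (w : List Bool) (p : ℕ), FactorOf w fibWord ∧ 1 ≤ p ∧ HasPeriodL w p ∧
      ⌈((5 + Real.sqrt 5) / 2) * (p : ℝ)⌉₊ ≤ w.length := by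
  rintro ⟨w, p, ⟨i, hw⟩, hp, hper, hlen⟩
  set n := Nat.greatestFib p
  have hwindow : Nat.fib (n + 2) + p ≤ w.length := by
    refine le_trans ?_ hlen
    rw [show (5 + √5) / 2 = φ + 2 by ring]
    exact fib_add_two_add_le_ceil (Nat.greatestFib_pos.2 hp) (Nat.fib_greatestFib_le p)
  rw [hw, hasPeriodL_map_range_iff, fibWord_eq_wythoffWord] at hper
  have hconst (t : ℕ) (ht : t ≤ w.length - p) :=
    wythoff_add_add_wythoff_eq_of_periodic (fun t ht => hper t (by omega)) ht
  -- `fract (p φ)` is far from `0` and `1`, so adding `p` carries at `j₂` but not at `j₁`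
  obtain ⟨hlo, hhi⟩ := fract_mul_goldenRatio_mem_Icc n hp (Nat.lt_fib_greatestFib_add_one p)
  obtain ⟨j₁, hij₁, hj₁i, hj₁⟩ := exists_fract_mul_goldenRatio_lt n (i + 1)
  obtain ⟨j₂, hij₂, hj₂i, hj₂⟩ := exists_one_sub_le_fract_mul_goldenRatio n (i + 1)
  have h₁ := wythoff_add_of_fract_add_lt_one (j := j₁) (p := p) (by linarith)
  have h₂ := wythoff_add_of_one_le_fract_add (j := j₂) (p := p) (by linarith)
  obtain ⟨t₁, rfl⟩ := Nat.exists_eq_add_of_le hij₁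
  obtain ⟨t₂, rfl⟩ := Nat.exists_eq_add_of_le hij₂
  have hconst₁ := hconst t₁ (by omega)
  have hconst₂ := hconst t₂ (by omega)
  omega
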